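/- arXiv:1807.10863 — 4 statements merged into one kernel-verified Lean document; each statement's English description precedes it below -/
import Mathlib

section
/- Let n ≥ 1, let K be a subgroup of U(n), and let 𝔨 be a real subspace of the skew-Hermitian n×n complex matrices such that k·B·k⁻¹ ∈ 𝔨 for all k ∈ K and B ∈ 𝔨. Assume the moment map is injective on K-orbits, i.e. for all z, w ∈ ℂⁿ: if there exists k ∈ K such that Im⟨w, B w⟩ = Im⟨z, (k⁻¹ B k) z⟩ for all B ∈ 𝔨, then w = k′ z for some k′ ∈ K. Let U ∈ 𝔨 satisfy k·U·k⁻¹ = U for all k ∈ K, and let x be a nonzero real number. Then for every X ∈ 𝔨, the set F_X := { z ∈ ℂⁿ : ∃ k ∈ K such that tr(U B) + (x/2)·Im⟨z, B z⟩ = tr(X · k⁻¹ B k) for all B ∈ 𝔨 } is either empty or a single K-orbit; that is, any two elements z, w ∈ F_X satisfy w = k z for some k ∈ K. (This is Theorem 1: together with Proposition 1 it yields n(O^G_{(U,0,x)}, O^K_X) ≤ 1 for every K-coadjoint orbit O^K_X; the moment-map injectivity hypothesis is the property of Gelfand pairs (K, H_n) used in the proof.) -/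
open Matrix Complex Finset

/-! If `z` lies in `F_X` with witness `k`, its moment map is `(2/x)(Ad*(k) X - U)` on `𝔨`.
As `U` is `K`-invariant, the moment maps of two points of `F_X` with witnesses `k₁, k₂` differ
by the coadjoint action of `k₂ k₁⁻¹`, and injectivity of the moment map on `K`-orbits puts both
points in one orbit. -/

namespace Matrix

variable {n α : Type*} [Fintype n] [DecidableEq n] [CommRing α] [StarRing α]

theorem trace_conj_mul_conj {A : Matrix n n α} (hA : A ∈ unitaryGroup n α) (U B : Matrix n n α) :
    trace ((A * U * star A) * (A * B * star A)) = trace (U * B) := by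
  have h : star A * A = 1 := (mem_unitaryGroup_iff').1 hA
  calc trace ((A * U * star A) * (A * B * star A))
      = trace (A * (U * (star A * A) * B) * star A) := by simp only [mul_assoc]
    _ = trace (U * B) := by rw [trace_mul_cycle, ← mul_assoc, h, one_mul, mul_one]

theorem UnitaryGroup.star_mul_self_mul (k : unitaryGroup n α) (A : Matrix n n α) :
    star (k : Matrix n n α) * (k * A) = A := by
  rw [← mul_assoc, UnitaryGroup.star_mul_self, one_mul]

end Matrix

theorem corwinGreenleaf_le_one_of_central_general {n : ℕ}
    (K : Subgroup (Matrix.unitaryGroup (Fin n) ℂ))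
    (𝔨 : Submodule ℝ (Matrix (Fin n) (Fin n) ℂ))
    (hAd : ∀ k ∈ K, ∀ B ∈ 𝔨,
      (k : Matrix (Fin n) (Fin n) ℂ) * B * star (k : Matrix (Fin n) (Fin n) ℂ) ∈ 𝔨)
    (hmoment : ∀ z w : Fin n → ℂ,
      (∃ k ∈ K, ∀ B ∈ 𝔨,
        (∑ j, w j * (starRingEnd ℂ) (B.mulVec w j)).im
          = (∑ j, z j * (starRingEnd ℂ)
              (((star (k : Matrix (Fin n) (Fin n) ℂ) * B *
                  (k : Matrix (Fin n) (Fin n) ℂ)).mulVec z) j)).im) →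
      ∃ k' ∈ K, w = (k' : Matrix (Fin n) (Fin n) ℂ).mulVec z)
    (U : Matrix (Fin n) (Fin n) ℂ)
    (hUcent : ∀ k ∈ K,
      (k : Matrix (Fin n) (Fin n) ℂ) * U * star (k : Matrix (Fin n) (Fin n) ℂ) = U)
    (x : ℝ) (hx : x ≠ 0)
    (X : Matrix (Fin n) (Fin n) ℂ) :
    ∀ z ∈ {z : Fin n → ℂ | ∃ k ∈ K, ∀ B ∈ 𝔨,
        Matrix.trace (U * B)
          + ((((x / 2) * (∑ j, z j * (starRingEnd ℂ) (B.mulVec z j)).im : ℝ)) : ℂ)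
          = Matrix.trace (X * (star (k : Matrix (Fin n) (Fin n) ℂ) * B *
              (k : Matrix (Fin n) (Fin n) ℂ)))},
      ∀ w ∈ {z : Fin n → ℂ | ∃ k ∈ K, ∀ B ∈ 𝔨,
        Matrix.trace (U * B)
          + ((((x / 2) * (∑ j, z j * (starRingEnd ℂ) (B.mulVec z j)).im : ℝ)) : ℂ)
          = Matrix.trace (X * (star (k : Matrix (Fin n) (Fin n) ℂ) * B *
              (k : Matrix (Fin n) (Fin n) ℂ)))},
      ∃ k ∈ K, w = (k : Matrix (Fin n) (Fin n) ℂ).mulVec z := by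
  rintro z ⟨k₁, hk₁, hz⟩ w ⟨k₂, hk₂, hw⟩
  set g : unitaryGroup (Fin n) ℂ := k₁ * k₂⁻¹
  have hg : g ∈ K := mul_mem hk₁ (inv_mem hk₂)
  refine hmoment z w ⟨g⁻¹, inv_mem hg, fun B hB => ?_⟩
  rw [UnitaryGroup.inv_val, star_star]
  set C := (g : Matrix (Fin n) (Fin n) ℂ) * B * star (g : Matrix (Fin n) (Fin n) ℂ)
  have hCk₁ : star (k₁ : Matrix (Fin n) (Fin n) ℂ) * C * k₁
      = star (k₂ : Matrix (Fin n) (Fin n) ℂ) * B * k₂ := by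
    simp [C, g, mul_assoc, UnitaryGroup.star_mul_self_mul]
  have htr : trace (U * C) = trace (U * B) := by
    conv_lhs => rw [← hUcent g hg]
    exact trace_conj_mul_conj g.2 U B
  have hzC := hz C (hAd g hg B hB)
  rw [hCk₁, ← hw B hB, htr, add_right_inj, ofReal_inj] at hzC
  exact (mul_left_cancel₀ (div_ne_zero hx two_ne_zero) hzC).symm

/-- Theorem 1: if the moment map for the action of a closed subgroup
`K ≤ U(n)` on `ℂⁿ` is injective on `K`-orbits (the property of Gelfand pairs
`(K, H_n)` used in the proof), `U ∈ 𝔨` is central and `x ≠ 0`, then for every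
`X ∈ 𝔨` the set `F_X` is either empty or a single `K`-orbit. -/
theorem corwinGreenleaf_le_one_of_central {n : ℕ} (hn : 1 ≤ n)
    (K : Subgroup (Matrix.unitaryGroup (Fin n) ℂ))
    (𝔨 : Submodule ℝ (Matrix (Fin n) (Fin n) ℂ))
    (hskew : ∀ B ∈ 𝔨, Bᴴ = -B)
    (hAd : ∀ k ∈ K, ∀ B ∈ 𝔨,
      (k : Matrix (Fin n) (Fin n) ℂ) * B * star (k : Matrix (Fin n) (Fin n) ℂ) ∈ 𝔨)
    (hmoment : ∀ z w : Fin n → ℂ,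
      (∃ k ∈ K, ∀ B ∈ 𝔨,
        (∑ j, w j * (starRingEnd ℂ) (B.mulVec w j)).im
          = (∑ j, z j * (starRingEnd ℂ)
              (((star (k : Matrix (Fin n) (Fin n) ℂ) * B *
                  (k : Matrix (Fin n) (Fin n) ℂ)).mulVec z) j)).im) →
      ∃ k' ∈ K, w = (k' : Matrix (Fin n) (Fin n) ℂ).mulVec z)
    (U : Matrix (Fin n) (Fin n) ℂ) (hU : U ∈ 𝔨)
    (hUcent : ∀ k ∈ K,
      (k : Matrix (Fin n) (Fin n) ℂ) * U * star (k : Matrix (Fin n) (Fin n) ℂ) = U)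
    (x : ℝ) (hx : x ≠ 0)
    (X : Matrix (Fin n) (Fin n) ℂ) (hX : X ∈ 𝔨) :
    ∀ z ∈ {z : Fin n → ℂ | ∃ k ∈ K, ∀ B ∈ 𝔨,
        Matrix.trace (U * B)
          + ((((x / 2) * (∑ j, z j * (starRingEnd ℂ) (B.mulVec z j)).im : ℝ)) : ℂ)
          = Matrix.trace (X * (star (k : Matrix (Fin n) (Fin n) ℂ) * B *
              (k : Matrix (Fin n) (Fin n) ℂ)))},
      ∀ w ∈ {z : Fin n → ℂ | ∃ k ∈ K, ∀ B ∈ 𝔨,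
        Matrix.trace (U * B)
          + ((((x / 2) * (∑ j, z j * (starRingEnd ℂ) (B.mulVec z j)).im : ℝ)) : ℂ)
          = Matrix.trace (X * (star (k : Matrix (Fin n) (Fin n) ℂ) * B *
              (k : Matrix (Fin n) (Fin n) ℂ)))},
      ∃ k ∈ K, w = (k : Matrix (Fin n) (Fin n) ℂ).mulVec z :=
  corwinGreenleaf_le_one_of_central_general K 𝔨 hAd hmoment U hUcent x hx X
end

section
/- Let n ≥ 1, let U and X be skew-Hermitian n×n complex matrices, and let x be a nonzero real number. Set H := { k ∈ U(n) : k U k* = U } (the stabilizer of U in U(n)) and F_X := { z ∈ ℂⁿ : ∃ A ∈ U(n), U + (i x/2)·zz* = A X A* }. Then there is a bijection between the set of U(n)-orbits of O^G_{(U,x)} ∩ pr⁻¹(O^K_X) (for the action k·(M,v) = (k M k*, k v)) and the set of H-orbits of F_X (for the action h·z = h z). In particular, the Corwin–Greenleaf multiplicity n(O^G_{(U,0,x)}, O^K_X) equals the number of H-orbits in F_X. (Proposition 1 for K = U(n).) -/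
/-!
For `x ≠ 0` the map `Φ (M, v) = (M + (i x / 2) v v*, x v)` is a `U(n)`-equivariant injection
of `M_n(ℂ) × ℂⁿ` into itself, and `O^G_{(U,x)}` is the `U(n)`-saturation of `Φ ({U} × ℂⁿ)`.
As `pr⁻¹(O^K_X)` is `U(n)`-invariant, every orbit in the intersection meets `Φ ({U} × F_X)`,
and `Φ (U, z)`, `Φ (U, w)` are `U(n)`-conjugate iff `(U, z)`, `(U, w)` are, i.e. iff `z` and
`w` lie in one orbit of the stabilizer `H` of `U`.
-/

open Matrix Complex Finset

/-- The outer matrix `z w*` with `(l,j)` entry `z l * conj (w j)`. -/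
noncomputable def outerMat {n : ℕ} (z w : Fin n → ℂ) : Matrix (Fin n) (Fin n) ℂ :=
  Matrix.of fun l j => z l * (starRingEnd ℂ) (w j)

/-- The generic coadjoint orbit `O^G_{(U,x)}` of the Heisenberg motion group,
realized in `M_n(ℂ) × ℂⁿ`. -/
noncomputable def genOrbit {n : ℕ} (U : Matrix (Fin n) (Fin n) ℂ) (x : ℝ) :
    Set (Matrix (Fin n) (Fin n) ℂ × (Fin n → ℂ)) :=
  {p | ∃ k : Matrix.unitaryGroup (Fin n) ℂ, ∃ z : Fin n → ℂ,
    p = ((k : Matrix (Fin n) (Fin n) ℂ) *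
          (U + ((Complex.I * (x : ℂ)) / 2) • outerMat z z) *
          star (k : Matrix (Fin n) (Fin n) ℂ),
        (x : ℂ) • (k : Matrix (Fin n) (Fin n) ℂ).mulVec z)}

/-- `pr⁻¹(O^K_X)` realized in `M_n(ℂ) × ℂⁿ`. -/
noncomputable def prInv {n : ℕ} (X : Matrix (Fin n) (Fin n) ℂ) :
    Set (Matrix (Fin n) (Fin n) ℂ × (Fin n → ℂ)) :=
  {p | ∃ A : Matrix.unitaryGroup (Fin n) ℂ,
    p.1 = (A : Matrix (Fin n) (Fin n) ℂ) * X * star (A : Matrix (Fin n) (Fin n) ℂ)}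

open MulAction

noncomputable def Set.imageEquivImageOfEqIff {α γ δ : Type*} {f : α → γ} {g : α → δ}
    {s : Set α} (h : ∀ a ∈ s, ∀ b ∈ s, f a = f b ↔ g a = g b) : f '' s ≃ g '' s :=
  (Equiv.setCongr (Set.image_eq_range f s)).trans <|
    (Setoid.quotientKerEquivRange _).symm.trans <|
      (Quotient.congrRight fun a b : s => h a a.2 b b.2).trans <|
        (Setoid.quotientKerEquivRange _).trans (Equiv.setCongr (Set.image_eq_range g s).symm)

namespace MulAction

variable {G α β : Type*} [Group G] [MulAction G α] [MulAction G β]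

theorem setOf_exists_eq_smul (a : α) : {b | ∃ g : G, b = g • a} = orbit G a := by
  simp only [orbit, Set.range, eq_comm]

theorem orbit_eq_orbit_iff_of_injective {f : α → β} (hf : Function.Injective f)
    (hsmul : ∀ (g : G) a, f (g • a) = g • f a) {a b : α} :
    orbit G (f a) = orbit G (f b) ↔ orbit G a = orbit G b := by
  simp only [orbit_eq_iff, mem_orbit_iff, ← hsmul, hf.eq_iff]

theorem mk_mem_orbit_iff (u : α) (z w : β) :
    (u, w) ∈ orbit G (u, z) ↔ w ∈ orbit (stabilizer G u) z := by
  simp [mem_orbit_iff, Prod.ext_iff, mem_stabilizer_iff]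

theorem orbit_mk_eq_orbit_mk_iff (u : α) (z w : β) :
    orbit G (u, z) = orbit G (u, w) ↔ orbit (stabilizer G u) z = orbit (stabilizer G u) w := by
  rw [orbit_eq_iff, orbit_eq_iff, mk_mem_orbit_iff]

theorem setOf_orbits_eq_image (u : α) {Φ : α × β → α × β} {O P : Set (α × β)}
    (hO : ∀ p, p ∈ O ↔ ∃ (g : G) (z : β), p = g • Φ (u, z))
    (hP : ∀ (g : G), ∀ p ∈ P, g • p ∈ P) :
    {S | ∃ p ∈ O ∩ P, S = {q | ∃ g : G, q = g • p}} =
      (fun z => orbit G (Φ (u, z))) '' {z | Φ (u, z) ∈ P} := by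
  ext S
  simp only [setOf_exists_eq_smul]
  constructor
  · rintro ⟨p, ⟨hpO, hpP⟩, rfl⟩
    obtain ⟨g, z, rfl⟩ := (hO p).1 hpO
    exact ⟨z, by simpa using hP g⁻¹ _ hpP, (orbit_smul g _).symm⟩
  · rintro ⟨z, hz, rfl⟩
    exact ⟨Φ (u, z), ⟨(hO _).2 ⟨1, z, (one_smul G _).symm⟩, hz⟩, rfl⟩

theorem setOf_stabilizer_orbits_eq_image (u : α) (F : Set β) :
    {S | ∃ z ∈ F, S = {w | ∃ g : G, g • u = u ∧ w = g • z}} =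
      (fun z => orbit (stabilizer G u) z) '' F := by
  ext S
  simp [orbit, Set.range, eq_comm, Subtype.exists, mem_stabilizer_iff]

theorem nonempty_orbits_equiv_stabilizer_orbits (u : α) {Φ : α × β → α × β}
    (hΦ : Function.Injective Φ) (hsmul : ∀ (g : G) p, Φ (g • p) = g • Φ p)
    {O P : Set (α × β)}
    (hO : ∀ p, p ∈ O ↔ ∃ (g : G) (z : β), p = g • Φ (u, z))
    (hP : ∀ (g : G), ∀ p ∈ P, g • p ∈ P) :
    Nonempty ({S | ∃ p ∈ O ∩ P, S = {q | ∃ g : G, q = g • p}} ≃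
      {S | ∃ z ∈ {z | Φ (u, z) ∈ P}, S = {w | ∃ g : G, g • u = u ∧ w = g • z}}) := by
  rw [setOf_orbits_eq_image u hO hP, setOf_stabilizer_orbits_eq_image]
  exact ⟨Set.imageEquivImageOfEqIff fun z _ w _ =>
    (orbit_eq_orbit_iff_of_injective hΦ hsmul).trans (orbit_mk_eq_orbit_mk_iff u z w)⟩

end MulAction

namespace HeisenbergMotion

variable {n : ℕ}

theorem outerMat_mulVec (A : Matrix (Fin n) (Fin n) ℂ) (z : Fin n → ℂ) :
    outerMat (A *ᵥ z) (A *ᵥ z) = A * outerMat z z * star A := by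
  ext l j
  simp only [outerMat, mul_apply, mulVec, dotProduct, of_apply, star_apply, map_sum, map_mul,
    Finset.sum_mul, Finset.mul_sum]
  exact Finset.sum_congr rfl fun r _ => Finset.sum_congr rfl fun m _ => by
    simp only [Complex.star_def]; ring

/-- Not an instance: `U(n)` already acts on matrices by left multiplication. -/
@[reducible] def conjAction :
    MulAction (unitaryGroup (Fin n) ℂ) (Matrix (Fin n) (Fin n) ℂ) where
  smul k M := (k : Matrix _ _ ℂ) * M * star (k : Matrix _ _ ℂ)
  one_smul M := by
    change 1 * M * star 1 = M
    simp
  mul_smul k m M := by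
    change _ * _ * star (_ * _) = _ * (_ * _ * _) * _
    simp [StarMul.star_mul, Matrix.mul_assoc]

noncomputable def heisenbergMap (x : ℝ) (p : Matrix (Fin n) (Fin n) ℂ × (Fin n → ℂ)) :
    Matrix (Fin n) (Fin n) ℂ × (Fin n → ℂ) :=
  (p.1 + ((Complex.I * (x : ℂ)) / 2) • outerMat p.2 p.2, (x : ℂ) • p.2)

theorem heisenbergMap_conj (x : ℝ) (k : unitaryGroup (Fin n) ℂ)
    (p : Matrix (Fin n) (Fin n) ℂ × (Fin n → ℂ)) :
    heisenbergMap x ((k : Matrix _ _ ℂ) * p.1 * star (k : Matrix _ _ ℂ),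
        (k : Matrix _ _ ℂ) *ᵥ p.2) =
      ((k : Matrix _ _ ℂ) * (heisenbergMap x p).1 * star (k : Matrix _ _ ℂ),
        (k : Matrix _ _ ℂ) *ᵥ (heisenbergMap x p).2) := by
  simp only [heisenbergMap, outerMat_mulVec, mulVec_smul, Matrix.mul_add, Matrix.add_mul,
    Matrix.mul_smul, Matrix.smul_mul]

theorem heisenbergMap_injective {x : ℝ} (hx : x ≠ 0) :
    Function.Injective (heisenbergMap (n := n) x) := by
  rintro ⟨M, v⟩ ⟨N, w⟩ h
  simp only [heisenbergMap, Prod.mk.injEq] at h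
  obtain ⟨hM, hv⟩ := h
  obtain rfl : v = w := smul_right_injective _ (Complex.ofReal_ne_zero.mpr hx) hv
  simpa using hM

theorem mem_genOrbit_iff (U : Matrix (Fin n) (Fin n) ℂ) (x : ℝ)
    (p : Matrix (Fin n) (Fin n) ℂ × (Fin n → ℂ)) :
    p ∈ genOrbit U x ↔ ∃ (k : unitaryGroup (Fin n) ℂ) (z : Fin n → ℂ),
      p = ((k : Matrix _ _ ℂ) * (heisenbergMap x (U, z)).1 * star (k : Matrix _ _ ℂ),
        (k : Matrix _ _ ℂ) *ᵥ (heisenbergMap x (U, z)).2) := by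
  simp only [genOrbit, heisenbergMap, Set.mem_ofPred_eq, mulVec_smul]

theorem conj_mem_prInv (X : Matrix (Fin n) (Fin n) ℂ) (k : unitaryGroup (Fin n) ℂ)
    {p : Matrix (Fin n) (Fin n) ℂ × (Fin n → ℂ)} (hp : p ∈ prInv X) :
    ((k : Matrix _ _ ℂ) * p.1 * star (k : Matrix _ _ ℂ), (k : Matrix _ _ ℂ) *ᵥ p.2) ∈ prInv X := by
  obtain ⟨A, hA⟩ := hp
  exact ⟨k * A, by simp only [hA, Submonoid.coe_mul, StarMul.star_mul, Matrix.mul_assoc]⟩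

end HeisenbergMotion

open HeisenbergMotion in
theorem orbit_bijection_general {n : ℕ}
    (U X : Matrix (Fin n) (Fin n) ℂ)
    (x : ℝ) (hx : x ≠ 0) :
    Nonempty (
      {S : Set (Matrix (Fin n) (Fin n) ℂ × (Fin n → ℂ)) |
        ∃ p ∈ genOrbit U x ∩ prInv X,
          S = {q | ∃ k : Matrix.unitaryGroup (Fin n) ℂ,
            q = ((k : Matrix (Fin n) (Fin n) ℂ) * p.1 * star (k : Matrix (Fin n) (Fin n) ℂ),
                 (k : Matrix (Fin n) (Fin n) ℂ).mulVec p.2)}} ≃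
      {S : Set (Fin n → ℂ) |
        ∃ z ∈ {z : Fin n → ℂ | ∃ A : Matrix.unitaryGroup (Fin n) ℂ,
            U + ((Complex.I * (x : ℂ)) / 2) • outerMat z z
              = (A : Matrix (Fin n) (Fin n) ℂ) * X * star (A : Matrix (Fin n) (Fin n) ℂ)},
          S = {w | ∃ h : Matrix.unitaryGroup (Fin n) ℂ,
            (h : Matrix (Fin n) (Fin n) ℂ) * U * star (h : Matrix (Fin n) (Fin n) ℂ) = U ∧
            w = (h : Matrix (Fin n) (Fin n) ℂ).mulVec z}}) :=
  @nonempty_orbits_equiv_stabilizer_orbits _ _ _ _ conjAction _ U _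
    (heisenbergMap_injective hx) (fun k p => heisenbergMap_conj x k p) _ _
    (mem_genOrbit_iff U x) (fun k _ => conj_mem_prInv X k)

/-- Proposition 1 for `K = U(n)`: the set of `U(n)`-orbits of
`O^G_{(U,x)} ∩ pr⁻¹(O^K_X)` is in bijection with the set of `H`-orbits of `F_X`,
where `H` is the stabilizer of `U` in `U(n)` and
`F_X = {z : U + (i x/2) z z* ∈ O^K_X}`. -/
theorem orbit_bijection {n : ℕ} (hn : 1 ≤ n)
    (U X : Matrix (Fin n) (Fin n) ℂ) (hU : Uᴴ = -U) (hX : Xᴴ = -X)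
    (x : ℝ) (hx : x ≠ 0) :
    Nonempty (
      {S : Set (Matrix (Fin n) (Fin n) ℂ × (Fin n → ℂ)) |
        ∃ p ∈ genOrbit U x ∩ prInv X,
          S = {q | ∃ k : Matrix.unitaryGroup (Fin n) ℂ,
            q = ((k : Matrix (Fin n) (Fin n) ℂ) * p.1 * star (k : Matrix (Fin n) (Fin n) ℂ),
                 (k : Matrix (Fin n) (Fin n) ℂ).mulVec p.2)}} ≃
      {S : Set (Fin n → ℂ) |
        ∃ z ∈ {z : Fin n → ℂ | ∃ A : Matrix.unitaryGroup (Fin n) ℂ,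
            U + ((Complex.I * (x : ℂ)) / 2) • outerMat z z
              = (A : Matrix (Fin n) (Fin n) ℂ) * X * star (A : Matrix (Fin n) (Fin n) ℂ)},
          S = {w | ∃ h : Matrix.unitaryGroup (Fin n) ℂ,
            (h : Matrix (Fin n) (Fin n) ℂ) * U * star (h : Matrix (Fin n) (Fin n) ℂ) = U ∧
            w = (h : Matrix (Fin n) (Fin n) ℂ).mulVec z}}) :=
  orbit_bijection_general U X x hx
end

section
/- Let n ≥ 2, let α < 0 be real, let a ∈ ℤ, and let μ = (μ_1,…,μ_n) ∈ ℤⁿ be dominant (μ_1 ≥ … ≥ μ_n) with μ ≠ (a,…,a). Suppose there exist z ∈ ℂⁿ and A ∈ U(n) such that i·a·I + (iα/2)·zz* = A·(i·diag(μ))·A*. Then, setting b := a + (α/2)·‖z‖², b is an integer with b < a, and there exists q with 1 ≤ q ≤ n such that μ_k = a for 1 ≤ k ≤ n−q and μ_k = b for n−q < k ≤ n; i.e. μ = (a,…,a,b,…,b). (Necessity direction of Theorem 4, Case α < 0.) -/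
open Matrix Complex Finset

/-! Conjugating by `A` turns the hypothesis into `i diag(μ) = i a I + (iα/2) w w*` with
`w = A* z`, and `‖w‖ = ‖z‖`. The off-diagonal entries force `w` to have at most one nonzero
coordinate, so every `μ_k` but one equals `a`, and the remaining one is `a + (α/2)‖w‖² < a`.
Dominance puts that entry last: in fact `q = 1`. -/

lemma outerMat_eq_vecMulVec {n : ℕ} (z w : Fin n → ℂ) : outerMat z w = vecMulVec z (star w) := rfl

lemma star_mul_outerMat_mul {n : ℕ} (M : Matrix (Fin n) (Fin n) ℂ) (z w : Fin n → ℂ) :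
    star M * outerMat z w * M = outerMat (star M *ᵥ z) (star M *ᵥ w) := by
  simp only [outerMat_eq_vecMulVec, mul_vecMulVec, vecMulVec_mul, star_mulVec,
    star_eq_conjTranspose, conjTranspose_conjTranspose]

section Unitary

variable {ι : Type*} [Fintype ι]

lemma ofReal_sum_normSq (z : ι → ℂ) : ((∑ j, normSq (z j) : ℝ) : ℂ) = star z ⬝ᵥ z := by
  simp [dotProduct, normSq_eq_conj_mul_self]

variable [DecidableEq ι]

lemma star_mulVec_dotProduct_mulVec_of_mem_unitaryGroup {U : Matrix ι ι ℂ}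
    (hU : U ∈ unitaryGroup ι ℂ) (z : ι → ℂ) : star (U *ᵥ z) ⬝ᵥ (U *ᵥ z) = star z ⬝ᵥ z := by
  rw [star_mulVec, dotProduct_mulVec, vecMul_vecMul, ← star_eq_conjTranspose,
    mem_unitaryGroup_iff'.mp hU, vecMul_one]

lemma sum_normSq_mulVec_of_mem_unitaryGroup {U : Matrix ι ι ℂ}
    (hU : U ∈ unitaryGroup ι ℂ) (z : ι → ℂ) :
    ∑ j, normSq ((U *ᵥ z) j) = ∑ j, normSq (z j) := by
  exact_mod_cast (ofReal_sum_normSq _).trans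
    ((star_mulVec_dotProduct_mulVec_of_mem_unitaryGroup hU z).trans (ofReal_sum_normSq z).symm)

end Unitary

lemma eq_smul_one_add_smul_outerMat_of_eq_conj {n : ℕ} {U D : Matrix (Fin n) (Fin n) ℂ}
    (hU : U ∈ unitaryGroup (Fin n) ℂ) {c t : ℂ} {z : Fin n → ℂ}
    (h : c • 1 + t • outerMat z z = U * D * star U) :
    D = c • 1 + t • outerMat (star U *ᵥ z) (star U *ᵥ z) := by
  have hU' : star U * U = 1 := mem_unitaryGroup_iff'.mp hU
  calc D = star U * (U * D * star U) * U := by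
        rw [← Matrix.mul_assoc, ← Matrix.mul_assoc, hU', Matrix.one_mul, Matrix.mul_assoc, hU',
          Matrix.mul_one]
    _ = _ := by
        rw [← h, Matrix.mul_add, Matrix.add_mul, Matrix.mul_smul, Matrix.smul_mul, Matrix.mul_smul,
          Matrix.smul_mul, Matrix.mul_one, hU', star_mul_outerMat_mul]

section RankOnePerturbation

variable {n : ℕ} {d w : Fin n → ℂ} {c t : ℂ}

lemma eq_zero_or_eq_zero_of_diagonal_eq (ht : t ≠ 0) (h : diagonal d = c • 1 + t • outerMat w w)
    {i j : Fin n} (hij : i ≠ j) : w i = 0 ∨ w j = 0 := by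
  have hij' := congrFun₂ h i j
  simpa [diagonal_apply_ne _ hij, one_apply_ne hij, outerMat, ht] using hij'

lemma apply_eq_add_mul_normSq_of_diagonal_eq (h : diagonal d = c • 1 + t • outerMat w w)
    (i : Fin n) : d i = c + t * normSq (w i) := by
  have hii := congrFun₂ h i i
  simpa [outerMat, mul_conj] using hii

end RankOnePerturbation

lemma val_eq_sub_one_of_antitone {β : Type*} [Preorder β] {n : ℕ} {f : Fin n → β}
    (hf : Antitone f) {i : Fin n} {c : β} (hi : f i < c) (hc : ∀ j ≠ i, f j = c) :
    (i : ℕ) = n - 1 := by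
  by_contra hne
  have hlast : (⟨n - 1, by omega⟩ : Fin n) ≠ i := fun h => hne (congrArg Fin.val h).symm
  have := hf (show i ≤ ⟨n - 1, by omega⟩ from Fin.mk_le_mk.mpr (by omega))
  exact (hc _ hlast ▸ this).not_gt hi

theorem mu_form_of_neg_general {n : ℕ} (α : ℝ) (hα : α < 0) (a : ℤ)
    (mu : Fin n → ℤ) (hmu : ∀ i j : Fin n, i ≤ j → mu j ≤ mu i)
    (hne : mu ≠ fun _ => a)
    (z : Fin n → ℂ) (A : Matrix.unitaryGroup (Fin n) ℂ)
    (hconj : (Complex.I * (a : ℂ)) • (1 : Matrix (Fin n) (Fin n) ℂ)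
        + ((Complex.I * (α : ℂ)) / 2) • outerMat z z
      = (A : Matrix (Fin n) (Fin n) ℂ) *
          (Complex.I • Matrix.diagonal fun i => ((mu i : ℤ) : ℂ)) *
          star (A : Matrix (Fin n) (Fin n) ℂ)) :
    ∃ b : ℤ, ((b : ℝ) = (a : ℝ) + (α / 2) * ∑ j, Complex.normSq (z j)) ∧ b < a ∧
      ∃ q : ℕ, 1 ≤ q ∧ q ≤ n ∧
        ∀ k : Fin n, ((k : ℕ) < n - q → mu k = a) ∧ (n - q ≤ (k : ℕ) → mu k = b) := by
  rw [← diagonal_smul] at hconj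
  have hdiag := eq_smul_one_add_smul_outerMat_of_eq_conj A.2 hconj
  set w := star (A : Matrix (Fin n) (Fin n) ℂ) *ᵥ z
  have ht : I * (α : ℂ) / 2 ≠ 0 := by simp [hα.ne]
  have hmu_eq (i : Fin n) : (mu i : ℝ) = a + α / 2 * normSq (w i) := by
    have hi : I * (mu i : ℂ) = I * ((a + α / 2 * normSq (w i) : ℝ) : ℂ) := by
      have hii := apply_eq_add_mul_normSq_of_diagonal_eq hdiag i
      rw [Pi.smul_apply, smul_eq_mul] at hii
      rw [hii]
      push_cast
      ring
    exact_mod_cast mul_left_cancel₀ I_ne_zero hi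
  obtain ⟨i₀, hi₀⟩ : ∃ i, mu i ≠ a := by
    by_contra! h
    exact hne (funext h)
  have hw₀ : w i₀ ≠ 0 := fun h => hi₀ (by simpa [h] using hmu_eq i₀)
  have hw : ∀ j ≠ i₀, w j = 0 := fun j hj =>
    (eq_zero_or_eq_zero_of_diagonal_eq ht hdiag hj).resolve_right hw₀
  have hmu_a : ∀ j ≠ i₀, mu j = a := fun j hj => by simpa [hw j hj] using hmu_eq j
  have hnorm : ∑ j, normSq (z j) = normSq (w i₀) := by
    rw [← sum_normSq_mulVec_of_mem_unitaryGroup (Unitary.star_mem A.2) z]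
    change ∑ j, normSq (w j) = _
    exact sum_eq_single_of_mem i₀ (mem_univ _) fun j _ hj => by simp [hw j hj]
  have hlt : mu i₀ < a := by
    have hpos := normSq_pos.mpr hw₀
    exact_mod_cast (by nlinarith [hmu_eq i₀] : (mu i₀ : ℝ) < a)
  have hi₀_last := val_eq_sub_one_of_antitone hmu hlt hmu_a
  refine ⟨mu i₀, by rw [hmu_eq, hnorm], hlt, 1, le_rfl, i₀.pos,
    fun k => ⟨fun hk => ?_, fun hk => ?_⟩⟩
  · exact hmu_a k (by rintro rfl; omega)
  · exact congrArg mu (Fin.ext (by omega))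

/-- necessity in Theorem 4, case `α < 0`: if
`i a I + (i α/2) z z*` is unitarily conjugate to `i diag(μ)` for some dominant
`μ ≠ (a,…,a)`, then `b := a + (α/2)‖z‖²` is an integer `< a` and
`μ = (a,…,a,b,…,b)` with `b` occurring `q` times, `1 ≤ q ≤ n`. -/
theorem mu_form_of_neg {n : ℕ} (hn : 2 ≤ n) (α : ℝ) (hα : α < 0) (a : ℤ)
    (mu : Fin n → ℤ) (hmu : ∀ i j : Fin n, i ≤ j → mu j ≤ mu i)
    (hne : mu ≠ fun _ => a)
    (z : Fin n → ℂ) (A : Matrix.unitaryGroup (Fin n) ℂ)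
    (hconj : (Complex.I * (a : ℂ)) • (1 : Matrix (Fin n) (Fin n) ℂ)
        + ((Complex.I * (α : ℂ)) / 2) • outerMat z z
      = (A : Matrix (Fin n) (Fin n) ℂ) *
          (Complex.I • Matrix.diagonal fun i => ((mu i : ℤ) : ℂ)) *
          star (A : Matrix (Fin n) (Fin n) ℂ)) :
    ∃ b : ℤ, ((b : ℝ) = (a : ℝ) + (α / 2) * ∑ j, Complex.normSq (z j)) ∧ b < a ∧
      ∃ q : ℕ, 1 ≤ q ∧ q ≤ n ∧
        ∀ k : Fin n, ((k : ℕ) < n - q → mu k = a) ∧ (n - q ≤ (k : ℕ) → mu k = b) :=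
  mu_form_of_neg_general α hα a mu hmu hne z A hconj
end

section
/- Let n ≥ 1, λ = (λ_1,…,λ_n) ∈ ℝⁿ, μ = (μ_1,…,μ_n) ∈ ℝⁿ, α ∈ ℝ, z ∈ ℂⁿ, and suppose there exists A ∈ U(n) such that i·diag(λ) + (iα/2)·zz* = A·(i·diag(μ))·A*. Then for every k ∈ {1,…,n}: ∏_{i=1}^n (μ_k − λ_i) = (α/2)·Σ_{j=1}^n |z_j|²·∏_{i≠j} (μ_k − λ_i). Equivalently, V_{λ,μ} = (α/2)·B_{λ,μ}·(|z_1|², …, |z_n|²)ᵀ. (Key linear system in the proof of Theorem 3.) -/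
/-!
`M = diag(λ) + (α/2) z z*` is unitarily similar to `diag(μ)`, so each `μ_k` is a root of the
characteristic polynomial of `M`. By the matrix determinant lemma, that polynomial is
`∏ᵢ (X - λᵢ) - (α/2) Σⱼ |zⱼ|² ∏_{i ≠ j} (X - λᵢ)`.
-/

open Matrix Complex Finset

open Polynomial

namespace Matrix

variable {n : Type*} [Fintype n] [DecidableEq n]

theorem det_diagonal_add_vecMulVec_of_ne_zero {K : Type*} [Field K] {d : n → K}
    (hd : ∀ i, d i ≠ 0) (u v : n → K) :
    (diagonal d + vecMulVec u v).det = ∏ i, d i + ∑ j, u j * v j * ∏ i ∈ univ.erase j, d i := by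
  have hdet : IsUnit (diagonal d).det := by
    simpa [det_diagonal, isUnit_iff_ne_zero] using prod_ne_zero_iff.mpr fun i _ => hd i
  have hinv : (diagonal d)⁻¹ = diagonal fun i => (d i)⁻¹ :=
    inv_eq_left_inv (by simp [diagonal_mul_diagonal, hd])
  rw [vecMulVec_eq (ι := Unit), det_add_replicateCol_mul_replicateRow hdet, det_diagonal,
    det_unique, hinv]
  simp only [PUnit.default_eq_unit, add_apply, one_apply_eq, mul_apply, replicateRow_apply,
    diagonal_apply, mul_ite, mul_zero, sum_ite_eq', mem_univ, ↓reduceIte, replicateCol_apply,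
    mul_add, mul_one, mul_sum, add_right_inj]
  refine sum_congr rfl fun j _ => ?_
  rw [← mul_prod_erase _ _ (mem_univ j)]
  field_simp [hd j]

/-- Both sides agree at every `t` outside the finite set of the `d i`, where
`det_diagonal_add_vecMulVec_of_ne_zero` applies. -/
theorem charpoly_diagonal_add_vecMulVec {K : Type*} [Field K] [Infinite K] (d u v : n → K) :
    (diagonal d + vecMulVec u v).charpoly
      = ∏ i, (X - C (d i)) - ∑ j, C (u j * v j) * ∏ i ∈ univ.erase j, (X - C (d i)) := by
  refine eq_of_infinite_eval_eq _ _ ((Set.finite_range d).infinite_compl.mono fun t ht => ?_)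
  have hne : ∀ i, t - d i ≠ 0 := fun i h => ht ⟨i, (sub_eq_zero.mp h).symm⟩
  have hmat : scalar n t - (diagonal d + vecMulVec u v)
      = diagonal (fun i => t - d i) + vecMulVec (-u) v := by
    ext i j
    by_cases hij : i = j <;> simp [hij, vecMulVec_apply]
    ring
  rw [Set.mem_ofPred_eq, eval_charpoly, hmat, det_diagonal_add_vecMulVec_of_ne_zero hne]
  simp [eval_prod, eval_finsetSum, sub_eq_add_neg]

theorem charpoly_unitary_conj {R : Type*} [CommRing R] [StarRing R] (A : unitaryGroup n R)
    (N : Matrix n n R) : ((A : Matrix n n R) * N * star (A : Matrix n n R)).charpoly = N.charpoly := by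
  rw [charpoly_mul_comm, ← Matrix.mul_assoc, Unitary.star_mul_self_of_mem A.2, Matrix.one_mul]

end Matrix

theorem linear_system_of_conj_general {n : ℕ} (lam mu : Fin n → ℝ) (α : ℝ)
    (z : Fin n → ℂ)
    (h : ∃ A : Matrix.unitaryGroup (Fin n) ℂ,
      Complex.I • Matrix.diagonal (fun i => ((lam i : ℝ) : ℂ))
          + ((Complex.I * (α : ℂ)) / 2) • outerMat z z
        = (A : Matrix (Fin n) (Fin n) ℂ) *
            (Complex.I • Matrix.diagonal fun i => ((mu i : ℝ) : ℂ)) *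
            star (A : Matrix (Fin n) (Fin n) ℂ)) :
    ∀ k : Fin n,
      (∏ i, (mu k - lam i))
        = (α / 2) * ∑ j, Complex.normSq (z j) *
            ∏ i ∈ Finset.univ.erase j, (mu k - lam i) := by
  obtain ⟨A, hA⟩ := h
  have hM : diagonal (fun i => (lam i : ℂ)) + vecMulVec ((α / 2 : ℂ) • z) (star z)
      = (A : Matrix (Fin n) (Fin n) ℂ) * diagonal (fun i => (mu i : ℂ))
          * star (A : Matrix (Fin n) (Fin n) ℂ) := by
    refine smul_right_injective _ I_ne_zero ?_
    have houter : outerMat z z = vecMulVec z (star z) := rfl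
    simpa [houter, smul_add, mul_div_assoc, ← smul_smul, Matrix.mul_smul, Matrix.smul_mul,
      smul_vecMulVec] using hA
  intro k
  have hroot := congrArg (eval (mu k : ℂ) ∘ charpoly) hM
  simp only [Function.comp_apply, charpoly_diagonal_add_vecMulVec, charpoly_unitary_conj,
    charpoly_diagonal] at hroot
  simp only [Pi.smul_apply, smul_eq_mul, Pi.star_apply, RCLike.star_def, mul_assoc, mul_conj,
    map_mul, eval_sub, eval_prod, eval_X, eval_C, eval_finsetSum, eval_mul, sub_self,
    prod_eq_zero (mem_univ k)] at hroot
  rw [← mul_sum, sub_eq_zero] at hroot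
  exact_mod_cast hroot

/-- key linear system in the proof of Theorem 3: if
`i diag(λ) + (i α/2) z z* = A (i diag(μ)) A*` for some `A ∈ U(n)`, then for
every `k`, `∏ᵢ (μ_k − λᵢ) = (α/2) Σⱼ |zⱼ|² ∏_{i ≠ j} (μ_k − λᵢ)`; equivalently
`V_{λ,μ} = (α/2) B_{λ,μ} (|z₁|²,…,|zₙ|²)ᵀ`. -/
theorem linear_system_of_conj {n : ℕ} (hn : 1 ≤ n) (lam mu : Fin n → ℝ) (α : ℝ)
    (z : Fin n → ℂ)
    (h : ∃ A : Matrix.unitaryGroup (Fin n) ℂ,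
      Complex.I • Matrix.diagonal (fun i => ((lam i : ℝ) : ℂ))
          + ((Complex.I * (α : ℂ)) / 2) • outerMat z z
        = (A : Matrix (Fin n) (Fin n) ℂ) *
            (Complex.I • Matrix.diagonal fun i => ((mu i : ℝ) : ℂ)) *
            star (A : Matrix (Fin n) (Fin n) ℂ)) :
    ∀ k : Fin n,
      (∏ i, (mu k - lam i))
        = (α / 2) * ∑ j, Complex.normSq (z j) *
            ∏ i ∈ Finset.univ.erase j, (mu k - lam i) :=
  linear_system_of_conj_general lam mu α z h
end
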